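/- arXiv:2310.05958 — 5 statements merged into one kernel-verified Lean document; each statement's English description precedes it below -/
import Mathlib

section
/- If f: {0,1}^n → {0,1} is non-constant, with f(z₁) = 1 and f(z₂) = 0, then letting X^{z₁⊕z₂} denote the tensor product of X gates on positions where z₁ and z₂ differ (and identity elsewhere, including on the last qubit), the operator C_f† X^{z₁⊕z₂} C_f is not an element of the (n+1)-qubit Pauli group; in particular, C_f is not a Clifford unitary. -/
open Complex Matrix

noncomputable section

/-- The diagonal unitary `C_f` on `n+1` qubits. -/
def Cf (n : ℕ) (f : (Fin n → Bool) → Bool) :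
    Matrix ((Fin n → Bool) × Bool) ((Fin n → Bool) × Bool) ℂ :=
  Matrix.diagonal fun p =>
    Complex.exp (Complex.I * (Real.pi / 4) * (1 - 2 * (if p.2 then 1 else 0)) *
      (if f p.1 then 1 else 0))

/-- The Pauli operator `X^a Z^b` on `n+1` qubits, acting on basis states as
`|v⟩ ↦ (-1)^{b·v} |v ⊕ a⟩`. -/
def pauliXZ (n : ℕ) (a b : (Fin n → Bool) × Bool) :
    Matrix ((Fin n → Bool) × Bool) ((Fin n → Bool) × Bool) ℂ :=
  fun w v =>
    if w = ((fun i => xor (v.1 i) (a.1 i)), xor v.2 a.2) then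
      (-1 : ℂ) ^ (((Finset.univ.filter fun i => b.1 i ∧ v.1 i).card) +
        (if b.2 ∧ v.2 then 1 else 0))
    else 0

/-- The Pauli group on `n+1` qubits: phases `±1, ±i` times operators `X^a Z^b`. -/
def PauliGroup (n : ℕ) :
    Set (Matrix ((Fin n → Bool) × Bool) ((Fin n → Bool) × Bool) ℂ) :=
  {P | ∃ (c : ℂ) (a b : (Fin n → Bool) × Bool),
    c ∈ ({1, Complex.I, -1, -Complex.I} : Set ℂ) ∧ P = c • pauliXZ n a b}

/-- The Pauli operator `X^{z₁ ⊕ z₂}`: `X` on qubit `i` iff `z₁ i ≠ z₂ i`, identity on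
the last qubit. -/
def Xdiff (n : ℕ) (z₁ z₂ : Fin n → Bool) :
    Matrix ((Fin n → Bool) × Bool) ((Fin n → Bool) × Bool) ℂ :=
  pauliXZ n ((fun i => xor (z₁ i) (z₂ i)), false) ((fun _ => false), false)

/-!
Conjugation by the diagonal unitary `C_f` rescales the `((z₁, y), (z₂, y))` entry of
`X^{z₁⊕z₂}` (which is `1`) by a phase; as `f z₁ = 1` and `f z₂ = 0`, it becomes `e^{-iπ/4}` for
`y = 0` and `e^{iπ/4}` for `y = 1`. Every nonzero entry of `c • X^a Z^b` is `±c`, so all nonzero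
entries of a Pauli group element have the same square, whereas `(e^{-iπ/4})² = -i ≠ i = (e^{iπ/4})²`.
-/

theorem Matrix.diagonal_conjTranspose_mul_mul_diagonal_apply {ι α : Type*} [DecidableEq ι]
    [Fintype ι] [NonUnitalSemiring α] [StarRing α] (d : ι → α) (A : Matrix ι ι α) (i j : ι) :
    ((diagonal d)ᴴ * A * diagonal d) i j = star (d i) * A i j * d j := by
  rw [diagonal_conjTranspose, mul_diagonal, diagonal_mul, Pi.star_apply]

lemma pauliXZ_apply_eq_zero_or_sq_eq_one (n : ℕ) (a b w v : (Fin n → Bool) × Bool) :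
    pauliXZ n a b w v = 0 ∨ pauliXZ n a b w v ^ 2 = 1 := by
  unfold pauliXZ
  split
  · right
    rw [← pow_mul, mul_comm, pow_mul, neg_one_sq, one_pow]
  · left; rfl

lemma sq_apply_eq_sq_apply_of_mem_pauliGroup {n : ℕ}
    {P : Matrix ((Fin n → Bool) × Bool) ((Fin n → Bool) × Bool) ℂ} (hP : P ∈ PauliGroup n)
    {w v w' v' : (Fin n → Bool) × Bool} (h : P w v ≠ 0) (h' : P w' v' ≠ 0) :
    P w v ^ 2 = P w' v' ^ 2 := by
  obtain ⟨c, a, b, -, rfl⟩ := hP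
  simp only [Matrix.smul_apply, smul_eq_mul, mul_pow] at h h' ⊢
  rw [(pauliXZ_apply_eq_zero_or_sq_eq_one n a b w v).resolve_left (right_ne_zero_of_mul h),
    (pauliXZ_apply_eq_zero_or_sq_eq_one n a b w' v').resolve_left (right_ne_zero_of_mul h')]

lemma Xdiff_mem_pauliGroup (n : ℕ) (z₁ z₂ : Fin n → Bool) : Xdiff n z₁ z₂ ∈ PauliGroup n :=
  ⟨1, _, _, Or.inl rfl, (one_smul ℂ _).symm⟩

lemma Xdiff_apply_mk_mk (n : ℕ) (z₁ z₂ : Fin n → Bool) (y : Bool) :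
    Xdiff n z₁ z₂ (z₁, y) (z₂, y) = 1 := by
  simp [Xdiff, pauliXZ, Bool.xor_left_comm]

section

variable {n : ℕ} {f : (Fin n → Bool) → Bool} {z₁ z₂ : Fin n → Bool}

lemma Cf_conj_Xdiff_apply (h₁ : f z₁ = true) (h₂ : f z₂ = false) (y : Bool) :
    ((Cf n f)ᴴ * Xdiff n z₁ z₂ * Cf n f) (z₁, y) (z₂, y) =
      cexp ((if y then 1 else -1) * (Real.pi / 4 * I)) := by
  rw [Cf, diagonal_conjTranspose_mul_mul_diagonal_apply, Xdiff_apply_mk_mk]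
  cases y <;> simp [h₁, h₂, ← exp_conj, map_ofNat] <;> congr 1 <;> ring

lemma Cf_conj_Xdiff_apply_sq (h₁ : f z₁ = true) (h₂ : f z₂ = false) (y : Bool) :
    ((Cf n f)ᴴ * Xdiff n z₁ z₂ * Cf n f) (z₁, y) (z₂, y) ^ 2 = if y then I else -I := by
  rw [Cf_conj_Xdiff_apply h₁ h₂, ← exp_nat_mul]
  cases y <;> simp only [Bool.false_eq_true, ↓reduceIte]
  · refine (congrArg cexp ?_).trans exp_neg_pi_div_two_mul_I
    push_cast; ring
  · refine (congrArg cexp ?_).trans exp_pi_div_two_mul_I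
    push_cast; ring

end

/-- If `f` is non-constant, witnessed by `f z₁ = 1`, `f z₂ = 0`, then
`C_f† X^{z₁⊕z₂} C_f` is not a Pauli group element; in particular `C_f` is not Clifford. -/
theorem Cf_not_clifford (n : ℕ) (f : (Fin n → Bool) → Bool) (z₁ z₂ : Fin n → Bool)
    (h₁ : f z₁ = true) (h₂ : f z₂ = false) :
    (Cf n f)ᴴ * Xdiff n z₁ z₂ * Cf n f ∉ PauliGroup n ∧
    ¬ (∀ P ∈ PauliGroup n, (Cf n f)ᴴ * P * Cf n f ∈ PauliGroup n) := by
  have not_pauli : (Cf n f)ᴴ * Xdiff n z₁ z₂ * Cf n f ∉ PauliGroup n := by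
    intro hP
    have entry_ne_zero (y : Bool) :
        ((Cf n f)ᴴ * Xdiff n z₁ z₂ * Cf n f) (z₁, y) (z₂, y) ≠ 0 := by
      rw [Cf_conj_Xdiff_apply h₁ h₂]; exact exp_ne_zero _
    have hsq :=
      sq_apply_eq_sq_apply_of_mem_pauliGroup hP (entry_ne_zero false) (entry_ne_zero true)
    rw [Cf_conj_Xdiff_apply_sq h₁ h₂, Cf_conj_Xdiff_apply_sq h₁ h₂] at hsq
    norm_num [Complex.ext_iff] at hsq
  exact ⟨not_pauli, fun hClifford => not_pauli (hClifford _ (Xdiff_mem_pauliGroup n z₁ z₂))⟩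

end
end

section
/- Let f: {0,1}^n → {0,1} be non-constant, with f(z₁) = 1 and f(z₂) = 0, and let C_f be the diagonal unitary with C_f|x,y⟩ = e^{iπ(1-2y)f(x)/4}|x,y⟩. Then the restriction of C_f to the 4-dimensional subspace spanned by |z₁,0⟩, |z₂,0⟩, |z₁,1⟩, |z₂,1⟩ is entangling: there exists a product state in this subspace (with respect to the split between the first n qubits and last qubit) whose image under C_f is not a product state. -/
open Complex Matrix

noncomputable section

/-- A vector in `(ℂ²)^⊗n ⊗ ℂ²` (indexed by `(Fin n → Bool) × Bool`) is a product state
for the bipartition between the first `n` qubits and the last qubit. -/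
def IsProductState (n : ℕ) (v : ((Fin n → Bool) × Bool) → ℂ) : Prop :=
  ∃ (a : (Fin n → Bool) → ℂ) (b : Bool → ℂ), ∀ p, v p = a p.1 * b p.2

/-! A product state `v` satisfies the 2×2 minor relation `v(x,0) v(x',1) = v(x,1) v(x',0)`.
`C_f` multiplies the entries at `(z₁,0)`, `(z₁,1)`, `(z₂,0)`, `(z₂,1)` by `e^{iπ/4}`,
`e^{-iπ/4}`, `1`, `1`, so for a product state with these entries nonzero the relation survives
in `C_f v` only if `e^{iπ/4} = e^{-iπ/4}`, i.e. `e^{iπ/2} = 1`, which is false. The state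
`(|z₁⟩ + |z₂⟩) ⊗ (|0⟩ + |1⟩)` is such a product state in the given subspace. -/

open scoped Real

theorem IsProductState.mul_swap_snd {n : ℕ} {v : ((Fin n → Bool) × Bool) → ℂ}
    (hv : IsProductState n v) (x x' : Fin n → Bool) (y y' : Bool) :
    v (x, y) * v (x', y') = v (x, y') * v (x', y) := by
  obtain ⟨a, b, hab⟩ := hv
  simp only [hab]
  ring

theorem isProductState_comp_fst (n : ℕ) (a : (Fin n → Bool) → ℂ) :
    IsProductState n fun p => a p.1 :=
  ⟨a, fun _ => 1, fun _ => (mul_one _).symm⟩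

theorem Pi.single_comp_fst_eq_add {α R : Type*} [DecidableEq α] [Semiring R] (z : α) :
    (fun p : α × Bool => (Pi.single z 1 : α → R) p.1) =
      Pi.single (z, false) 1 + Pi.single (z, true) 1 := by
  ext ⟨x, y⟩
  cases y <;> simp [Pi.single_apply]

theorem Cf_mulVec_apply_of_false {n : ℕ} {f : (Fin n → Bool) → Bool} {x : Fin n → Bool}
    (hx : f x = false) (v : ((Fin n → Bool) × Bool) → ℂ) (y : Bool) :
    (Cf n f *ᵥ v) (x, y) = v (x, y) := by
  simp [Cf, mulVec_diagonal, hx]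

theorem Cf_mulVec_apply_of_true_false {n : ℕ} {f : (Fin n → Bool) → Bool}
    {x : Fin n → Bool} (hx : f x = true) (v : ((Fin n → Bool) × Bool) → ℂ) :
    (Cf n f *ᵥ v) (x, false) = exp (π / 4 * I) * v (x, false) := by
  simp [Cf, mulVec_diagonal, hx, mul_comm]

theorem Cf_mulVec_apply_of_true_true {n : ℕ} {f : (Fin n → Bool) → Bool}
    {x : Fin n → Bool} (hx : f x = true) (v : ((Fin n → Bool) × Bool) → ℂ) :
    (Cf n f *ᵥ v) (x, true) = exp (-(π / 4 * I)) * v (x, true) := by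
  simp only [Cf, mulVec_diagonal, hx]
  congr 2
  simp only [↓reduceIte, mul_one]
  ring

theorem exp_pi_div_four_mul_I_ne_exp_neg : exp (π / 4 * I) ≠ exp (-(π / 4 * I)) := by
  intro h
  have : exp (π / 2 * I) = 1 := by
    rw [show (π / 2 * I : ℂ) = π / 4 * I + π / 4 * I by ring, exp_add]
    nth_rw 2 [h]
    rw [← exp_add, add_neg_cancel, exp_zero]
  rw [exp_pi_div_two_mul_I] at this
  simpa using congrArg im this

theorem not_isProductState_Cf_mulVec {n : ℕ} {f : (Fin n → Bool) → Bool}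
    {z₁ z₂ : Fin n → Bool} (h₁ : f z₁ = true) (h₂ : f z₂ = false)
    {v : ((Fin n → Bool) × Bool) → ℂ} (hv : IsProductState n v)
    (hv₀ : v (z₁, false) * v (z₂, true) ≠ 0) :
    ¬ IsProductState n (Cf n f *ᵥ v) := by
  intro hw
  have hminor := hw.mul_swap_snd z₁ z₂ false true
  rw [Cf_mulVec_apply_of_true_false h₁, Cf_mulVec_apply_of_true_true h₁,
    Cf_mulVec_apply_of_false h₂, Cf_mulVec_apply_of_false h₂,
    mul_assoc, mul_assoc, hv.mul_swap_snd z₁ z₂ false true] at hminor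
  rw [hv.mul_swap_snd z₁ z₂ false true] at hv₀
  exact exp_pi_div_four_mul_I_ne_exp_neg (mul_right_cancel₀ hv₀ hminor)

/-- If `f` is non-constant (with `f z₁ = 1`, `f z₂ = 0`), then `C_f` restricted to the
span of `|z₁,0⟩, |z₂,0⟩, |z₁,1⟩, |z₂,1⟩` is entangling: some product state in this
subspace is mapped by `C_f` to a non-product state. -/
theorem Cf_entangling_on_subspace (n : ℕ) (f : (Fin n → Bool) → Bool)
    (z₁ z₂ : Fin n → Bool) (h₁ : f z₁ = true) (h₂ : f z₂ = false) :
    ∃ v : ((Fin n → Bool) × Bool) → ℂ,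
      v ∈ Submodule.span ℂ
        ({Pi.single (z₁, false) 1, Pi.single (z₂, false) 1,
          Pi.single (z₁, true) 1, Pi.single (z₂, true) 1} :
            Set (((Fin n → Bool) × Bool) → ℂ)) ∧
      IsProductState n v ∧ ¬ IsProductState n (Cf n f *ᵥ v) := by
  have hne : z₁ ≠ z₂ := fun h => by simp [h, h₂] at h₁
  let v : ((Fin n → Bool) × Bool) → ℂ :=
    fun p => (Pi.single z₁ 1 + Pi.single z₂ 1 : (Fin n → Bool) → ℂ) p.1
  have hv_eq : v = Pi.single (z₁, false) 1 + Pi.single (z₁, true) 1 +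
      (Pi.single (z₂, false) 1 + Pi.single (z₂, true) 1) := by
    rw [← Pi.single_comp_fst_eq_add, ← Pi.single_comp_fst_eq_add]
    rfl
  have hv : IsProductState n v := isProductState_comp_fst n _
  refine ⟨v, ?_, hv, not_isProductState_Cf_mulVec h₁ h₂ hv ?_⟩
  · rw [hv_eq]
    refine add_mem (add_mem ?_ ?_) (add_mem ?_ ?_) <;>
      exact Submodule.subset_span (by simp)
  · simp [v, hne, hne.symm]
end
end

section
/- Let φ₁, φ₂ ∈ (π/2)Z and α ∈ R. Then max(|e^{iπ/4} − e^{iα}e^{iφ₁}|, |1 − e^{iα}e^{iφ₂}|) ≥ |1 − e^{iπ/8}| = 2 sin(π/16). -/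
open Complex

noncomputable section

theorem abs_exp_sub_exp' (a b : ℝ) :
    ‖Complex.exp (Complex.I * a) - Complex.exp (Complex.I * b)‖ =
      2 * |Real.sin ((a - b) / 2)| := by
  have h : Complex.exp (Complex.I * a) - Complex.exp (Complex.I * b)
      = Complex.exp ((((a+b)/2 : ℝ)) * Complex.I) * (2 * (Real.sin ((a-b)/2) : ℂ) * Complex.I) := by
    rw [mul_comm Complex.I (a:ℂ), mul_comm Complex.I (b:ℂ), Complex.exp_mul_I,
      Complex.exp_mul_I, Complex.exp_mul_I]
    have h1 : Complex.cos a - Complex.cos b =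
        -2 * Complex.sin ((a+b)/2) * Complex.sin ((a-b)/2) := Complex.cos_sub_cos a b
    have h2 : Complex.sin a - Complex.sin b =
        2 * Complex.sin ((a-b)/2) * Complex.cos ((a+b)/2) := Complex.sin_sub_sin a b
    push_cast
    push_cast at h1 h2
    linear_combination h1 + h2 * Complex.I -
      2 * Complex.sin (((a:ℂ)+b)/2) * Complex.sin (((a:ℂ)-b)/2) * Complex.I_sq
  rw [h, norm_mul, Complex.norm_exp_ofReal_mul_I, one_mul, norm_mul, norm_mul,
    Complex.norm_two, Complex.norm_I, Complex.norm_real, Real.norm_eq_abs, mul_one]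

theorem sin_lt_imp' (a t : ℝ) (ht0 : 0 < t) (ht : t ≤ Real.pi/2)
    (h : |Real.sin a| < Real.sin t) : ∃ n : ℤ, |a - n * Real.pi| < t := by
  have hπ : (0:ℝ) < Real.pi := Real.pi_pos
  set n : ℤ := round (a / Real.pi) with hn
  have h1 : |a / Real.pi - n| ≤ 1/2 := abs_sub_round _
  have h2 : |a - n * Real.pi| ≤ Real.pi / 2 := by
    calc |a - n * Real.pi| = |a / Real.pi - n| * Real.pi := by
          rw [show a - n * Real.pi = (a / Real.pi - n) * Real.pi by field_simp,
            abs_mul, abs_of_pos hπ]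
      _ ≤ 1/2 * Real.pi := by nlinarith [abs_nonneg (a / Real.pi - (n:ℝ))]
      _ = Real.pi / 2 := by ring
  have hs : |Real.sin (a - n * Real.pi)| = |Real.sin a| := by
    rw [Real.sin_sub, Real.sin_int_mul_pi, mul_zero, sub_zero, abs_mul,
      Real.abs_cos_int_mul_pi, mul_one]
  refine ⟨n, ?_⟩
  by_contra hc
  push_neg at hc
  have habs : Real.sin |a - n * Real.pi| = |Real.sin (a - n * Real.pi)| := by
    rcases abs_cases (a - n * Real.pi) with ⟨he, hp⟩ | ⟨he, hp⟩
    · rw [he, _root_.abs_of_nonneg (Real.sin_nonneg_of_nonneg_of_le_pi hp (by linarith))]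
    · rw [he, Real.sin_neg, _root_.abs_of_nonpos (Real.sin_nonpos_of_nonpos_of_neg_pi_le (by linarith) (by linarith))]
  have hmono : Real.sin t ≤ Real.sin |a - n * Real.pi| := by
    apply Real.strictMonoOn_sin.monotoneOn ?_ ?_ hc
    · constructor <;> [linarith; linarith]
    · constructor <;> [linarith [abs_nonneg (a - n*Real.pi)]; linarith]
  rw [habs, hs] at hmono
  linarith

theorem max_sin_key (x y : ℝ) (m : ℤ) (hxy : x - y = Real.pi/8 + Real.pi/4 * m) :
    Real.sin (Real.pi/16) ≤ max |Real.sin x| |Real.sin y| := by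
  have hπ : (0:ℝ) < Real.pi := Real.pi_pos
  by_contra hc
  push_neg at hc
  rw [max_lt_iff] at hc
  obtain ⟨n, hn⟩ := sin_lt_imp' x (Real.pi/16) (by linarith) (by linarith) hc.1
  obtain ⟨p, hp⟩ := sin_lt_imp' y (Real.pi/16) (by linarith) (by linarith) hc.2
  have h3 : |x - y - (↑(n - p) : ℝ) * Real.pi| < Real.pi/8 := by
    have := abs_sub_abs_le_abs_sub (x - n * Real.pi) (y - p * Real.pi)
    calc |x - y - (↑(n - p) : ℝ) * Real.pi|
        = |(x - n * Real.pi) - (y - p * Real.pi)| := by push_cast; ring_nf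
      _ ≤ |x - n * Real.pi| + |y - p * Real.pi| := abs_sub _ _
      _ < Real.pi/16 + Real.pi/16 := by linarith
      _ = Real.pi/8 := by ring
  set c : ℤ := 1 + 2*m - 8*(n - p) with hcdef
  have hco : x - y - (↑(n - p) : ℝ) * Real.pi = c * (Real.pi/8) := by
    rw [hxy, hcdef]; push_cast; ring
  have hc0 : c ≠ 0 := by omega
  have hc1 : (1:ℝ) ≤ |(c:ℝ)| := by
    rw [← Int.cast_abs]
    exact_mod_cast Int.one_le_abs hc0
  rw [hco, abs_mul, abs_of_pos (by linarith : (0:ℝ) < Real.pi/8)] at h3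
  nlinarith

/-- For phases `φ₁, φ₂` that are integer multiples of `π/2` and any global phase `α`,
`max(|e^{iπ/4} - e^{iα}e^{iφ₁}|, |1 - e^{iα}e^{iφ₂}|) ≥ |1 - e^{iπ/8}| = 2 sin(π/16)`. -/
theorem phase_approx_lower_bound (k₁ k₂ : ℤ) (α : ℝ) :
    max (‖Complex.exp (Complex.I * (Real.pi / 4)) -
          Complex.exp (Complex.I * α) *
            Complex.exp (Complex.I * ((Real.pi / 2) * (k₁ : ℝ)))‖)
        (‖1 - Complex.exp (Complex.I * α) *
            Complex.exp (Complex.I * ((Real.pi / 2) * (k₂ : ℝ)))‖) ≥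
      ‖1 - Complex.exp (Complex.I * (Real.pi / 8))‖ ∧
    ‖1 - Complex.exp (Complex.I * (Real.pi / 8))‖ =
      2 * Real.sin (Real.pi / 16) := by
  have hπ : (0:ℝ) < Real.pi := Real.pi_pos
  have hsinpos : 0 < Real.sin (Real.pi/16) :=
    Real.sin_pos_of_pos_of_lt_pi (by linarith) (by linarith)
  have e1 : Complex.exp (Complex.I * α) * Complex.exp (Complex.I * ((Real.pi / 2) * (k₁ : ℝ)))
      = Complex.exp (Complex.I * ((α + Real.pi/2 * k₁ : ℝ) : ℂ)) := by
    rw [← Complex.exp_add]; push_cast; ring_nf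
  have e2 : Complex.exp (Complex.I * α) * Complex.exp (Complex.I * ((Real.pi / 2) * (k₂ : ℝ)))
      = Complex.exp (Complex.I * ((α + Real.pi/2 * k₂ : ℝ) : ℂ)) := by
    rw [← Complex.exp_add]; push_cast; ring_nf
  have e0 : (1:ℂ) = Complex.exp (Complex.I * ((0:ℝ) : ℂ)) := by simp
  have c8 : Complex.I * ((Real.pi:ℂ) / 8) = Complex.I * ((Real.pi/8 : ℝ) : ℂ) := by
    push_cast; ring
  have c4 : Complex.I * ((Real.pi:ℂ) / 4) = Complex.I * ((Real.pi/4 : ℝ) : ℂ) := by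
    push_cast; ring
  have hRHS : ‖1 - Complex.exp (Complex.I * (Real.pi / 8))‖ =
      2 * Real.sin (Real.pi / 16) := by
    rw [c8, e0, abs_exp_sub_exp' 0 (Real.pi/8)]
    rw [show ((0:ℝ) - Real.pi/8)/2 = -(Real.pi/16) by ring, Real.sin_neg, abs_neg,
      abs_of_pos hsinpos]
  refine ⟨?_, hRHS⟩
  rw [hRHS, e1, e2, e0, c4, abs_exp_sub_exp', abs_exp_sub_exp']
  set x := (Real.pi/4 - (α + Real.pi/2 * k₁))/2 with hx
  set y := ((0:ℝ) - (α + Real.pi/2 * k₂))/2 with hy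
  have hkey := max_sin_key x y (k₂ - k₁) (by rw [hx, hy]; push_cast; ring)
  calc (2:ℝ) * Real.sin (Real.pi/16) ≤ 2 * max |Real.sin x| |Real.sin y| := by linarith
    _ = max (2 * |Real.sin x|) (2 * |Real.sin y|) := by
        rcases max_cases |Real.sin x| |Real.sin y| with ⟨h1, h2⟩ | ⟨h1, h2⟩ <;>
          rw [h1] <;> [rw [max_eq_left (by linarith)]; rw [max_eq_right (by linarith)]]
end
end

section
/- For any unit complex numbers u, v with u/v = e^{iπ/4}, and any w₁, w₂ that are fourth roots of unity and any α ∈ R: max(|u − e^{iα}w₁|, |v − e^{iα}w₂|) ≥ 2 sin(π/16). -/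
open Complex

noncomputable section

lemma abs_exp_theta_sub_one (θ : ℝ) :
    ‖Complex.exp ((θ : ℂ) * I) - 1‖ = 2 * |Real.sin (θ / 2)| := by
  have h : Complex.exp ((θ : ℂ) * I) - 1
      = Complex.exp (((θ / 2 : ℝ) : ℂ) * I) * (2 * Complex.sin ((θ / 2 : ℝ) : ℂ) * I) := by
    have he : Complex.exp ((θ : ℂ) * I)
        = Complex.exp (((θ / 2 : ℝ) : ℂ) * I) * Complex.exp (((θ / 2 : ℝ) : ℂ) * I) := by
      rw [← Complex.exp_add]
      push_cast
      ring_nf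
    have hne : Complex.exp (((θ / 2 : ℝ) : ℂ) * I) ≠ 0 := Complex.exp_ne_zero _
    rw [he, Complex.sin, neg_mul, Complex.exp_neg]
    field_simp
    ring_nf
    rw [Complex.I_sq]
    ring
  rw [h, norm_mul, Complex.norm_exp_ofReal_mul_I, one_mul, norm_mul, norm_mul,
    Complex.norm_I, mul_one, Complex.norm_two, ← Complex.ofReal_sin, Complex.norm_real, Real.norm_eq_abs]

/-- For unit complex numbers `u, v` with `u/v = e^{iπ/4}`, fourth roots of unity
`w₁, w₂`, and any `α ∈ ℝ`:
`max(|u - e^{iα}w₁|, |v - e^{iα}w₂|) ≥ 2 sin(π/16)`. -/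
theorem fourth_roots_approx_lower_bound (u v w₁ w₂ : ℂ) (α : ℝ)
    (hu : ‖u‖ = 1) (hv : ‖v‖ = 1)
    (huv : u / v = Complex.exp (Complex.I * (Real.pi / 4)))
    (hw₁ : w₁ ^ 4 = 1) (hw₂ : w₂ ^ 4 = 1) :
    max ‖u - Complex.exp (Complex.I * α) * w₁‖
        ‖v - Complex.exp (Complex.I * α) * w₂‖ ≥
      2 * Real.sin (Real.pi / 16) := by
  have hw₁0 : w₁ ≠ 0 := by intro h; rw [h] at hw₁; norm_num at hw₁
  have hw₂0 : w₂ ≠ 0 := by intro h; rw [h] at hw₂; norm_num at hw₂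
  have hu0 : u ≠ 0 := by intro h; rw [h] at hu; simp at hu
  have hv0 : v ≠ 0 := by intro h; rw [h] at hv; simp at hv
  have habsw₁ : ‖w₁‖ = 1 := by
    have := congrArg (‖·‖) hw₁
    simp only [norm_pow, norm_one] at this
    nlinarith [norm_nonneg w₁, sq_nonneg (‖w₁‖ - 1),
      sq_nonneg (‖w₁‖ + 1), sq_nonneg (‖w₁‖ ^ 2 - 1)]
  have habsw₂ : ‖w₂‖ = 1 := by
    have := congrArg (‖·‖) hw₂
    simp only [norm_pow, norm_one] at this
    nlinarith [norm_nonneg w₂, sq_nonneg (‖w₂‖ - 1),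
      sq_nonneg (‖w₂‖ + 1), sq_nonneg (‖w₂‖ ^ 2 - 1)]
  set e : ℂ := Complex.exp (Complex.I * α) with he
  have he0 : e ≠ 0 := Complex.exp_ne_zero _
  have habse : ‖e‖ = 1 := by
    rw [he, mul_comm, Complex.norm_exp_ofReal_mul_I]
  set a : ℂ := u / (e * w₁) with ha
  set b : ℂ := v / (e * w₂) with hb
  have habsa : ‖a‖ = 1 := by
    rw [ha, norm_div, norm_mul, hu, habse, habsw₁]; norm_num
  have habsb : ‖b‖ = 1 := by
    rw [hb, norm_div, norm_mul, hv, habse, habsw₂]; norm_num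
  have ha0 : a ≠ 0 := by intro h; rw [h] at habsa; simp at habsa
  have hb0 : b ≠ 0 := by intro h; rw [h] at habsb; simp at habsb
  -- distances
  have hd₁ : ‖u - e * w₁‖ = ‖a - 1‖ := by
    have : u - e * w₁ = (e * w₁) * (a - 1) := by
      rw [ha]; field_simp
    rw [this, norm_mul, norm_mul, habse, habsw₁]; ring
  have hd₂ : ‖v - e * w₂‖ = ‖b - 1‖ := by
    have : v - e * w₂ = (e * w₂) * (b - 1) := by
      rw [hb]; field_simp
    rw [this, norm_mul, norm_mul, habse, habsw₂]; ring
  -- key algebraic relation: (a/b)^4 = -1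
  have hab4 : (a / b) ^ 4 = -1 := by
    have : a / b = (u / v) * (w₂ / w₁) := by
      rw [ha, hb]; field_simp
    rw [this, huv, mul_pow, div_pow, hw₁, hw₂, ← Complex.exp_nat_mul]
    rw [show ((4 : ℕ) : ℂ) * (Complex.I * ((Real.pi : ℂ) / 4)) = (Real.pi : ℂ) * I by
      push_cast; ring, Complex.exp_pi_mul_I]
    norm_num
  -- write a, b as exponentials of their arguments
  set θ₁ : ℝ := Complex.arg a with hθ₁
  set θ₂ : ℝ := Complex.arg b with hθ₂
  have hae : a = Complex.exp ((θ₁ : ℂ) * I) := by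
    conv_lhs => rw [← Complex.norm_mul_exp_arg_mul_I a]
    rw [habsa, Complex.ofReal_one, one_mul]
  have hbe : b = Complex.exp ((θ₂ : ℂ) * I) := by
    conv_lhs => rw [← Complex.norm_mul_exp_arg_mul_I b]
    rw [habsb, Complex.ofReal_one, one_mul]
  -- max of |θ₁|, |θ₂| is at least π/8
  have hkey : |θ₁| ≥ Real.pi / 8 ∨ |θ₂| ≥ Real.pi / 8 := by
    by_contra hcon
    push_neg at hcon
    obtain ⟨h1, h2⟩ := hcon
    have hlt : |4 * (θ₁ - θ₂)| < Real.pi := by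
      have := abs_sub_abs_le_abs_sub θ₁ θ₂
      have h3 : |θ₁ - θ₂| ≤ |θ₁| + |θ₂| := abs_sub θ₁ θ₂
      rw [abs_mul]
      have : |(4 : ℝ)| = 4 := by norm_num
      rw [this]
      linarith
    -- compute (a/b)^4 = exp(4(θ₁-θ₂) I)
    have heq : Complex.exp ((↑(4 * (θ₁ - θ₂)) : ℂ) * I) = -1 := by
      have harg : ((4 * (θ₁ - θ₂) : ℝ) : ℂ) * I = ((4 : ℕ) : ℂ) * ((θ₁ : ℂ) * I - (θ₂ : ℂ) * I) := by
        push_cast; ring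
      rw [harg, Complex.exp_nat_mul, Complex.exp_sub, ← hae, ← hbe]
      exact hab4
    have hcos : Real.cos (4 * (θ₁ - θ₂)) = -1 := by
      rw [Complex.exp_mul_I, ← Complex.ofReal_cos, ← Complex.ofReal_sin] at heq
      have h5 := congrArg Complex.re heq
      simp only [Complex.add_re, Complex.ofReal_re, Complex.mul_re, Complex.I_re,
        Complex.ofReal_im, Complex.I_im, Complex.neg_re, Complex.one_re] at h5
      linarith
    have hgt : Real.cos (4 * (θ₁ - θ₂)) > -1 := by
      have h4 : Real.cos (4 * (θ₁ - θ₂)) = Real.cos |4 * (θ₁ - θ₂)| := by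
        rw [Real.cos_abs]
      rw [h4]
      have := Real.cos_lt_cos_of_nonneg_of_le_pi (abs_nonneg (4 * (θ₁ - θ₂)))
        (le_refl Real.pi) hlt
      rw [Real.cos_pi] at this
      linarith
    linarith
  -- convert to distance bound
  have hbound : ∀ θ : ℝ, -Real.pi < θ → θ ≤ Real.pi → |θ| ≥ Real.pi / 8 →
      2 * Real.sin (Real.pi / 16) ≤ 2 * |Real.sin (θ / 2)| := by
    intro θ hθl hθr hθ8
    have hpi : Real.pi > 0 := Real.pi_pos
    have habsθ : |θ| ≤ Real.pi := abs_le.mpr ⟨by linarith, hθr⟩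
    have h1 : |Real.sin (θ / 2)| = Real.sin (|θ| / 2) := by
      rcases le_or_gt 0 θ with hθ | hθ
      · rw [_root_.abs_of_nonneg hθ]
        have hs : (0 : ℝ) ≤ Real.sin (θ / 2) :=
          Real.sin_nonneg_of_nonneg_of_le_pi (by linarith) (by linarith)
        rw [_root_.abs_of_nonneg hs]
      · rw [_root_.abs_of_neg hθ]
        rw [_root_.abs_of_neg hθ] at habsθ
        have : Real.sin (θ / 2) ≤ 0 := by
          have := Real.sin_nonneg_of_nonneg_of_le_pi (x := -(θ / 2))
            (by linarith) (by linarith)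
          rw [Real.sin_neg] at this
          linarith
        rw [_root_.abs_of_nonpos this, show -θ / 2 = -(θ / 2) by ring, Real.sin_neg]
    rw [h1]
    have h2 : Real.sin (Real.pi / 16) ≤ Real.sin (|θ| / 2) := by
      apply Real.sin_le_sin_of_le_of_le_pi_div_two <;> [linarith; linarith; linarith]
    linarith
  have hθ₁l := Complex.neg_pi_lt_arg a
  have hθ₁r := Complex.arg_le_pi a
  have hθ₂l := Complex.neg_pi_lt_arg b
  have hθ₂r := Complex.arg_le_pi b
  rw [ge_iff_le, le_max_iff, hd₁, hd₂]
  rcases hkey with h | h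
  · left
    rw [hae, abs_exp_theta_sub_one]
    exact hbound θ₁ hθ₁l hθ₁r h
  · right
    rw [hbe, abs_exp_theta_sub_one]
    exact hbound θ₂ hθ₂l hθ₂r h
end
end

section
/- If f: {0,1}^n → {0,1} is non-constant, then for every Clifford unitary U on n+1 qubits and every α ∈ R, ‖C_f − e^{iα}U‖_∞ ≥ 2 sin(π/16), where C_f|x,y⟩ = e^{iπ(1-2y)f(x)/4}|x,y⟩. -/
open Complex Matrix

noncomputable section

/-- A Clifford unitary on `n+1` qubits: a unitary normalising the Pauli group. -/
def IsClifford (n : ℕ)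
    (U : Matrix ((Fin n → Bool) × Bool) ((Fin n → Bool) × Bool) ℂ) : Prop :=
  Uᴴ * U = 1 ∧ ∀ P ∈ PauliGroup n, U * P * Uᴴ ∈ PauliGroup n

/-- A matrix as a continuous linear operator on `ℓ²`; its norm is the operator norm. -/
def asCLM {ι : Type*} [Fintype ι] [DecidableEq ι] (A : Matrix ι ι ℂ) :
    EuclideanSpace ℂ ι →L[ℂ] EuclideanSpace ℂ ι :=
  Matrix.toEuclideanCLM (𝕜 := ℂ) A

/- ### Auxiliary lemmas -/

theorem asCLM_diagonal' {ι : Type*} [Fintype ι] [DecidableEq ι] (d : ι → ℂ) (x : ι) :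
    asCLM (Matrix.diagonal d) (EuclideanSpace.single x 1) = d x • EuclideanSpace.single x 1 := by
  ext i
  simp [asCLM, Matrix.mulVec_diagonal, Pi.single_apply, PiLp.single_apply]
  split <;> simp [*]

theorem asCLM_unitary' {ι : Type*} [Fintype ι] [DecidableEq ι] (A : Matrix ι ι ℂ)
    (h : Aᴴ * A = 1) (v : EuclideanSpace ℂ ι) : ‖asCLM A v‖ = ‖v‖ := by
  have h1 : (asCLM Aᴴ) ((asCLM A) v) = v := by
    rw [asCLM, asCLM, ← ContinuousLinearMap.comp_apply, ← ContinuousLinearMap.mul_def,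
      ← _root_.map_mul, h]
    simp
  have h2 : ContinuousLinearMap.adjoint (asCLM A) = asCLM Aᴴ := by
    rw [← ContinuousLinearMap.star_eq_adjoint, asCLM, asCLM, ← map_star]; rfl
  have h3 : (inner ℂ (asCLM A v) (asCLM A v) : ℂ) = inner ℂ v v := by
    have := ContinuousLinearMap.adjoint_inner_left (asCLM A) v ((asCLM A) v)
    rw [h2, h1] at this; exact this.symm
  rw [inner_self_eq_norm_sq_to_K, inner_self_eq_norm_sq_to_K] at h3
  have h4 : ‖asCLM A v‖ ^ 2 = ‖v‖ ^ 2 := by exact_mod_cast h3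
  rw [← Real.sqrt_sq (norm_nonneg ((asCLM A) v)), h4, Real.sqrt_sq (norm_nonneg v)]

theorem abs_exp_sub_exp_eq' (a b : ℝ) :
    ‖Complex.exp (I * a) - Complex.exp (I * b)‖ =
      2 * |Real.sin ((a - b) / 2)| := by
  have ha : Complex.exp (I * a) = Complex.cos a + Complex.sin a * I := by
    rw [mul_comm, Complex.exp_mul_I]
  have hb : Complex.exp (I * b) = Complex.cos b + Complex.sin b * I := by
    rw [mul_comm, Complex.exp_mul_I]
  rw [ha, hb]
  have : (Complex.cos a + Complex.sin a * I) - (Complex.cos b + Complex.sin b * I)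
      = Complex.ofReal (Real.cos a - Real.cos b)
        + Complex.ofReal (Real.sin a - Real.sin b) * I := by
    push_cast [Complex.ofReal_cos, Complex.ofReal_sin]
    ring
  rw [this, Complex.norm_def, Complex.normSq_add_mul_I]
  have key : (Real.cos a - Real.cos b)^2 + (Real.sin a - Real.sin b)^2
      = (2 * |Real.sin ((a - b) / 2)|)^2 := by
    have h1 : Real.cos (a - b) = Real.cos a * Real.cos b + Real.sin a * Real.sin b :=
      Real.cos_sub a b
    have h2 : Real.cos (2 * ((a - b)/2)) = Real.cos ((a-b)/2)^2 - Real.sin ((a-b)/2)^2 :=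
      Real.cos_two_mul' _
    have h3 : Real.sin ((a-b)/2)^2 + Real.cos ((a-b)/2)^2 = 1 := Real.sin_sq_add_cos_sq _
    have h4 : Real.sin a ^2 + Real.cos a^2 = 1 := Real.sin_sq_add_cos_sq _
    have h5 : Real.sin b ^2 + Real.cos b^2 = 1 := Real.sin_sq_add_cos_sq _
    have h6 : |Real.sin ((a-b)/2)|^2 = Real.sin ((a-b)/2)^2 := sq_abs _
    rw [show 2 * ((a-b)/2) = a - b by ring] at h2
    nlinarith [h1, h2, h3, h4, h5, h6]
  rw [key, Real.sqrt_sq (by positivity)]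

theorem close_to_pi_mul' (t : ℝ) (h : |Real.sin t| < Real.sin (Real.pi/16)) :
    |t - round (t/Real.pi) * Real.pi| < Real.pi/16 := by
  set m : ℤ := round (t/Real.pi)
  set r : ℝ := t - m * Real.pi with hr
  have hpi := Real.pi_pos
  have hr2 : |r| ≤ Real.pi/2 := by
    have h1 : |t/Real.pi - m| ≤ 1/2 := abs_sub_round _
    have h2 : r = (t/Real.pi - m) * Real.pi := by rw [hr]; field_simp
    rw [h2, abs_mul, abs_of_pos hpi]
    nlinarith
  have hsin : |Real.sin t| = |Real.sin r| := by
    conv_lhs => rw [show t = r + (m:ℝ) * Real.pi by ring]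
    rw [Real.sin_add_int_mul_pi, abs_mul]
    rcases Int.even_or_odd m with he | ho
    · rw [Even.neg_one_zpow he]; simp
    · rw [Odd.neg_one_zpow ho]; simp
  by_contra hc
  push_neg at hc
  have habs : Real.pi/16 ≤ |r| := hc
  have hmono : Real.sin (Real.pi/16) ≤ Real.sin |r| := by
    apply Real.strictMonoOn_sin.monotoneOn
    · constructor <;> nlinarith
    · constructor <;> [nlinarith [abs_nonneg r]; linarith [hr2]]
    · exact habs
  have habs2 : Real.sin |r| = |Real.sin r| := by
    rcases abs_cases r with ⟨h1, h2⟩ | ⟨h1, h2⟩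
    · rw [h1]
      exact (_root_.abs_of_nonneg (Real.sin_nonneg_of_nonneg_of_le_pi h2
        (by nlinarith [h1 ▸ hr2]))).symm
    · rw [h1, Real.sin_neg]
      have hs : Real.sin r ≤ 0 := by
        apply Real.sin_nonpos_of_nonpos_of_neg_pi_le h2.le
        nlinarith [h1 ▸ hr2]
      rw [abs_of_nonpos hs]
  rw [habs2, ← hsin] at hmono
  linarith

theorem max_sin_ge' (t₁ t₂ : ℝ) (k : ℤ)
    (h : t₁ - t₂ = Real.pi/8 + k * (Real.pi/4)) :
    Real.sin (Real.pi/16) ≤ |Real.sin t₁| ∨ Real.sin (Real.pi/16) ≤ |Real.sin t₂| := by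
  by_contra hc
  push_neg at hc
  obtain ⟨h1, h2⟩ := hc
  have c1 := close_to_pi_mul' t₁ h1
  have c2 := close_to_pi_mul' t₂ h2
  set m₁ : ℤ := round (t₁/Real.pi)
  set m₂ : ℤ := round (t₂/Real.pi)
  set j : ℤ := 1 + 2*k - 8*(m₁ - m₂) with hj
  have hje : (j : ℝ) * (Real.pi/8) = (t₁ - m₁ * Real.pi) - (t₂ - m₂ * Real.pi) := by
    push_cast [hj]
    nlinarith [h]
  have hj0 : j ≠ 0 := by omega
  have hj1 : (1:ℤ) ≤ |j| := Int.one_le_abs hj0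
  have hpi := Real.pi_pos
  have hge : Real.pi/8 ≤ |(j:ℝ) * (Real.pi/8)| := by
    rw [abs_mul, abs_of_pos (by linarith : (0:ℝ) < Real.pi/8)]
    have h1' : (1:ℝ) ≤ ((|j| : ℤ) : ℝ) := by exact_mod_cast hj1
    rw [Int.cast_abs] at h1'
    nlinarith
  rw [hje] at hge
  have htri : |(t₁ - m₁ * Real.pi) - (t₂ - m₂ * Real.pi)|
      ≤ |t₁ - m₁ * Real.pi| + |t₂ - m₂ * Real.pi| := abs_sub _ _
  linarith

set_option maxHeartbeats 1000000 in
/-- If `f` is non-constant then, assuming the standard facts (1) that diagonal Cliffords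
act on basis states by phases in `(π/2)ℤ` and (2) that non-diagonal Cliffords move some
basis state to a stabiliser state with overlap at most `1/√2`, every global-phase multiple
of a Clifford unitary is at operator-norm distance at least `2 sin(π/16)` from `C_f`. -/
theorem Cf_far_from_cliffords (n : ℕ) (f : (Fin n → Bool) → Bool)
    (hf : ∃ z₁ z₂ : Fin n → Bool, f z₁ = true ∧ f z₂ = false)
    (hdiag : ∀ U, IsClifford n U → U.IsDiag →
      ∃ φ : ((Fin n → Bool) × Bool) → ℤ, ∀ x,
        asCLM U (EuclideanSpace.single x 1) =
          Complex.exp (Complex.I * ((Real.pi / 2) * (φ x : ℝ))) •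
            EuclideanSpace.single x 1)
    (hnondiag : ∀ U, IsClifford n U → ¬ U.IsDiag →
      ∃ b : (Fin n → Bool) × Bool,
        (∀ c : ℂ, asCLM U (EuclideanSpace.single b 1) ≠ c • EuclideanSpace.single b 1) ∧
        ‖(inner (𝕜 := ℂ)
          (EuclideanSpace.single b 1 : EuclideanSpace ℂ ((Fin n → Bool) × Bool))
          (asCLM U (EuclideanSpace.single b 1)))‖ ≤ 1 / Real.sqrt 2) :
    ∀ U, IsClifford n U → ∀ α : ℝ,
      ‖asCLM (Cf n f - Complex.exp (Complex.I * α) • U)‖ ≥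
        2 * Real.sin (Real.pi / 16) := by
  intro U hU α
  obtain ⟨z₁, z₂, hz₁, hz₂⟩ := hf
  set dent : ((Fin n → Bool) × Bool) → ℂ := fun p =>
    Complex.exp (Complex.I * (Real.pi / 4) * (1 - 2 * (if p.2 then 1 else 0)) *
      (if f p.1 then 1 else 0)) with hdent
  have hCfdiag : Cf n f = Matrix.diagonal dent := rfl
  set M := Cf n f - Complex.exp (Complex.I * α) • U with hM
  have hMapp : ∀ p, asCLM M (EuclideanSpace.single p 1) =
      asCLM (Cf n f) (EuclideanSpace.single p 1)
        - Complex.exp (Complex.I * α) • asCLM U (EuclideanSpace.single p 1) := by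
    intro p
    rw [hM, asCLM, map_sub, _root_.map_smul]
    rfl
  have hop : ∀ p, ‖asCLM M (EuclideanSpace.single p 1)‖ ≤ ‖asCLM M‖ := by
    intro p
    calc ‖asCLM M (EuclideanSpace.single p 1)‖
        ≤ ‖asCLM M‖ * ‖(EuclideanSpace.single p 1 :
            EuclideanSpace ℂ ((Fin n → Bool) × Bool))‖ := (asCLM M).le_opNorm _
      _ = ‖asCLM M‖ := by rw [EuclideanSpace.norm_single, norm_one, mul_one]
  by_cases hD : U.IsDiag
  · -- diagonal case
    obtain ⟨φ, hφ⟩ := hdiag U hU hD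
    set p₁ : (Fin n → Bool) × Bool := (z₁, false)
    set p₂ : (Fin n → Bool) × Bool := (z₂, false)
    have hd₁ : dent p₁ = Complex.exp (Complex.I * ((Real.pi/4 : ℝ) : ℂ)) := by
      rw [hdent]
      simp only [p₁, hz₁]
      norm_num
    have hd₂ : dent p₂ = Complex.exp (Complex.I * ((0 : ℝ) : ℂ)) := by
      rw [hdent]
      simp only [p₂, hz₂]
      norm_num
    have key : ∀ (p : (Fin n → Bool) × Bool) (a : ℝ),
        dent p = Complex.exp (Complex.I * (a : ℂ)) →
        ‖asCLM M (EuclideanSpace.single p 1)‖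
          = 2 * |Real.sin ((a - (α + Real.pi/2 * (φ p : ℝ)))/2)| := by
      intro p a hp
      rw [hMapp p, hCfdiag, asCLM_diagonal', hφ p, smul_smul, ← sub_smul, norm_smul,
        EuclideanSpace.norm_single, norm_one, mul_one, ← Complex.exp_add]
      have harg : Complex.I * (α:ℂ) + Complex.I * ((Real.pi:ℂ) / 2 * (((φ p : ℝ)) : ℂ))
          = Complex.I * ((α + Real.pi/2 * (φ p : ℝ) : ℝ) : ℂ) := by
        push_cast
        ring
      rw [hp, harg, abs_exp_sub_exp_eq']
    have k₁ := key p₁ (Real.pi/4) hd₁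
    have k₂ := key p₂ 0 hd₂
    set t₁ : ℝ := (Real.pi/4 - (α + Real.pi/2 * (φ p₁ : ℝ)))/2
    set t₂ : ℝ := (0 - (α + Real.pi/2 * (φ p₂ : ℝ)))/2
    have hdiff : t₁ - t₂ = Real.pi/8 + ((φ p₂ - φ p₁ : ℤ) : ℝ) * (Real.pi/4) := by
      push_cast
      ring
    rcases max_sin_ge' t₁ t₂ (φ p₂ - φ p₁) hdiff with hg | hg
    · calc 2 * Real.sin (Real.pi/16) ≤ 2 * |Real.sin t₁| := by linarith
        _ = ‖asCLM M (EuclideanSpace.single p₁ 1)‖ := k₁.symm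
        _ ≤ ‖asCLM M‖ := hop p₁
    · calc 2 * Real.sin (Real.pi/16) ≤ 2 * |Real.sin t₂| := by linarith
        _ = ‖asCLM M (EuclideanSpace.single p₂ 1)‖ := k₂.symm
        _ ≤ ‖asCLM M‖ := hop p₂
  · -- non-diagonal case
    obtain ⟨b, _, hov⟩ := hnondiag U hU hD
    set e₀ : EuclideanSpace ℂ ((Fin n → Bool) × Bool) := EuclideanSpace.single b 1 with he₀
    set w : EuclideanSpace ℂ ((Fin n → Bool) × Bool) := asCLM U e₀ with hw
    have hnw : ‖w‖ = 1 := by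
      rw [hw, asCLM_unitary' U hU.1, he₀, EuclideanSpace.norm_single, norm_one]
    have habsd : ‖dent b‖ = 1 := by
      rw [hdent, Complex.norm_exp]
      rcases hb2 : b.2 <;> rcases hfb : f b.1 <;>
        simp [Complex.mul_re, Complex.mul_im]
    have hv : asCLM M e₀ = dent b • e₀ - Complex.exp (Complex.I * α) • w := by
      rw [he₀, hMapp b, hCfdiag, asCLM_diagonal']
    have hinner : ‖inner (𝕜 := ℂ) (dent b • e₀) (Complex.exp (Complex.I * α) • w)‖
        ≤ 1 / Real.sqrt 2 := by
      rw [inner_smul_left, inner_smul_right, norm_mul, norm_mul,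
        Complex.norm_conj, habsd, one_mul]
      have : ‖Complex.exp (Complex.I * α)‖ = 1 := by
        rw [Complex.norm_exp]
        simp [Complex.mul_re]
      rw [this, one_mul]
      exact hov
    have hsq : ‖asCLM M e₀‖^2 ≥ 2 - Real.sqrt 2 := by
      rw [hv, @norm_sub_sq ℂ]
      have hn1 : ‖dent b • e₀‖ = 1 := by
        rw [norm_smul, he₀, EuclideanSpace.norm_single, norm_one, mul_one,
          habsd]
      have hn2 : ‖Complex.exp (Complex.I * α) • w‖ = 1 := by
        rw [norm_smul, hnw, mul_one, Complex.norm_exp]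
        simp [Complex.mul_re]
      rw [hn1, hn2]
      have hre : RCLike.re (inner (𝕜 := ℂ) (dent b • e₀) (Complex.exp (Complex.I * α) • w))
          ≤ 1 / Real.sqrt 2 := by
        refine le_trans ?_ hinner
        exact (Complex.abs_re_le_norm _).trans' (le_abs_self _)
      have hs2 : Real.sqrt 2 > 0 := Real.sqrt_pos.mpr (by norm_num)
      have hs2' : Real.sqrt 2 * Real.sqrt 2 = 2 := Real.mul_self_sqrt (by norm_num)
      have h22 : 2 * ((1:ℝ)/Real.sqrt 2) = Real.sqrt 2 := by
        rw [mul_one_div, div_eq_iff (by positivity), hs2']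
      have hre2 : 2 * RCLike.re (inner (𝕜 := ℂ) (dent b • e₀)
          (Complex.exp (Complex.I * α) • w)) ≤ Real.sqrt 2 := by
        rw [← h22]; linarith
      nlinarith [hre2]
    have hfin : 2 * Real.sin (Real.pi/16) ≤ ‖asCLM M e₀‖ := by
      generalize hX : ‖asCLM M e₀‖ = X at hsq ⊢
      have hpi := Real.pi_pos
      have hs : Real.sin (Real.pi/16) ≤ Real.pi/16 :=
        (Real.sin_lt (by linarith)).le
      have hs0 : 0 ≤ Real.sin (Real.pi/16) :=
        Real.sin_nonneg_of_nonneg_of_le_pi (by linarith) (by linarith)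
      have hpi4 : Real.pi ≤ 4 := Real.pi_le_four
      have hs2 : Real.sqrt 2 * Real.sqrt 2 = 2 := Real.mul_self_sqrt (by norm_num)
      have hs2nn : 0 ≤ Real.sqrt 2 := Real.sqrt_nonneg 2
      have hnn : 0 ≤ X := hX ▸ norm_nonneg _
      have h1 : 2 * Real.sin (Real.pi/16) ≤ 1/2 := by linarith
      have h2 : Real.sqrt 2 ≤ 3/2 := by nlinarith [hs2, hs2nn]
      have h3 : (2 * Real.sin (Real.pi/16))^2 ≤ 1/4 := by nlinarith [hs0]
      have h4 : (2 * Real.sin (Real.pi/16))^2 ≤ X^2 := by linarith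
      calc 2 * Real.sin (Real.pi/16)
          = Real.sqrt ((2 * Real.sin (Real.pi/16))^2) := (Real.sqrt_sq (by linarith)).symm
        _ ≤ Real.sqrt (X^2) := Real.sqrt_le_sqrt h4
        _ = X := Real.sqrt_sq hnn
    calc 2 * Real.sin (Real.pi/16) ≤ ‖asCLM M e₀‖ := hfin
      _ ≤ ‖asCLM M‖ := hop b
end
end
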